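/- arXiv:1909.05276 — 2 statements merged into one kernel-verified Lean document; each statement's English description precedes it below -/
import Mathlib

section
/- Let m ≥ 2 and n ≥ 1, and let f : E^m → E^n be a function. If 0 is a limit point of the set P_f of distances preserved by f (i.e. for every ε > 0 there exists r ∈ P_f with 0 < r < ε), then f is 1-Lipschitz: d(f(x), f(y)) ≤ d(x, y) for all x, y ∈ E^m. -/
/-!
In dimension at least two, points at distance at most `2r` are joined by two `r`-hops through a
point of their perpendicular bisector, and one `r`-hop brings a point at distance at most
`(k + 1) r` from `y` to within `k r` of it. So a map preserving the distance `r` moves points at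
distance at most `k r` (`k ≥ 2`) to distance at most `k r`, whence `d(f x, f y) ≤ d(x, y) + 3r`;
letting `r → 0` through preserved distances gives the claim.
-/

open RealInnerProductSpace

variable {E : Type*} [NormedAddCommGroup E] [InnerProductSpace ℝ E]

theorem exists_norm_eq_inner_eq_zero (hE : 2 ≤ Module.rank ℝ E) (v : E) {c : ℝ} (hc : 0 ≤ c) :
    ∃ u : E, ‖u‖ = c ∧ ⟪v, u⟫ = 0 := by
  have hK : (ℝ ∙ v)ᗮ ≠ ⊥ := by
    rw [Ne, Submodule.orthogonal_eq_bot_iff]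
    intro htop
    have := rank_span_le (R := ℝ) ({v} : Set E)
    rw [htop, rank_top, Cardinal.mk_singleton] at this
    exact absurd (hE.trans this) (by norm_num)
  have := Submodule.nontrivial_iff_ne_bot.mpr hK
  obtain ⟨u, hu⟩ := exists_norm_eq (ℝ ∙ v)ᗮ hc
  exact ⟨u, hu, Submodule.mem_orthogonal_singleton_iff_inner_right.mp u.2⟩

theorem exists_dist_eq_dist_eq_of_dist_le_two_mul (hE : 2 ≤ Module.rank ℝ E) {x y : E} {r : ℝ}
    (hr : 0 ≤ r) (hxy : dist x y ≤ 2 * r) : ∃ z, dist x z = r ∧ dist z y = r := by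
  set w : E := (1 / 2 : ℝ) • (y - x)
  have hw : ‖w‖ = dist x y / 2 := by
    rw [norm_smul, ← dist_eq_norm']; norm_num; ring
  obtain ⟨u, hu, hwu⟩ := exists_norm_eq_inner_eq_zero hE w (Real.sqrt_nonneg (r ^ 2 - ‖w‖ ^ 2))
  have hlegs : √(‖u‖ * ‖u‖ + ‖w‖ * ‖w‖) = r := by
    rw [← sq, ← sq, hu, Real.sq_sqrt (by nlinarith [dist_nonneg (x := x) (y := y)]),
      sub_add_cancel, Real.sqrt_sq hr]
  have hwu' : ⟪u, w⟫ = 0 := by rw [real_inner_comm]; exact hwu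
  refine ⟨x + (u + w), ?_, ?_⟩
  · rw [dist_comm, dist_eq_norm, add_sub_cancel_left,
      norm_add_eq_sqrt_iff_real_inner_eq_zero.mpr hwu', hlegs]
  · rw [dist_eq_norm, show x + (u + w) - y = u - w by simp only [w]; module,
      norm_sub_eq_sqrt_iff_real_inner_eq_zero.mpr hwu', hlegs]

theorem exists_dist_eq_dist_eq_abs_sub {V : Type*} [NormedAddCommGroup V] [NormedSpace ℝ V]
    [Nontrivial V] (x y : V) {r : ℝ} (hr : 0 ≤ r) :
    ∃ z, dist x z = r ∧ dist z y = |dist x y - r| := by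
  rcases eq_or_ne x y with rfl | hxy
  · obtain ⟨u, hu⟩ := exists_norm_eq V hr
    refine ⟨x + u, ?_, ?_⟩ <;> simp [hu, abs_of_nonneg hr]
  · have hd : dist x y ≠ 0 := dist_ne_zero.mpr hxy
    refine ⟨AffineMap.lineMap x y (r / dist x y), ?_, ?_⟩
    · rw [dist_comm, dist_lineMap_left, Real.norm_eq_abs, abs_div, abs_of_nonneg hr, abs_dist,
        div_mul_cancel₀ _ hd]
    · have : dist x y - r = (1 - r / dist x y) * dist x y := by field_simp
      rw [dist_lineMap_right, this, abs_mul, abs_dist, Real.norm_eq_abs]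

def PreservesDist {α β : Type*} [PseudoMetricSpace α] [PseudoMetricSpace β] (f : α → β) (r : ℝ) :
    Prop :=
  ∀ x y, dist x y = r → dist (f x) (f y) = r

namespace PreservesDist

variable {F : Type*} [PseudoMetricSpace F] {f : E → F} {r : ℝ}

theorem dist_le_two_mul (hE : 2 ≤ Module.rank ℝ E) (hf : PreservesDist f r) (hr : 0 ≤ r)
    {x y : E} (hxy : dist x y ≤ 2 * r) : dist (f x) (f y) ≤ 2 * r := by
  obtain ⟨z, hxz, hzy⟩ := exists_dist_eq_dist_eq_of_dist_le_two_mul hE hr hxy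
  calc dist (f x) (f y) ≤ dist (f x) (f z) + dist (f z) (f y) := dist_triangle _ _ _
    _ = 2 * r := by rw [hf x z hxz, hf z y hzy]; ring

theorem dist_le_nat_mul (hE : 2 ≤ Module.rank ℝ E) (hf : PreservesDist f r) (hr : 0 ≤ r)
    {k : ℕ} (hk : 2 ≤ k) {x y : E} (hxy : dist x y ≤ k * r) : dist (f x) (f y) ≤ k * r := by
  induction k, hk using Nat.le_induction generalizing x with
  | base => exact_mod_cast hf.dist_le_two_mul hE hr (by exact_mod_cast hxy)
  | succ k hk ih =>
    have : Nontrivial E := rank_pos_iff_nontrivial.mp (lt_of_lt_of_le (by norm_num) hE)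
    obtain ⟨z, hxz, hzy⟩ := exists_dist_eq_dist_eq_abs_sub x y hr
    have hzy' : dist z y ≤ k * r := by
      rw [hzy, abs_le]
      push_cast at hxy
      constructor <;>
        nlinarith [(Nat.ofNat_le_cast.mpr hk : (2 : ℝ) ≤ k), dist_nonneg (x := x) (y := y)]
    calc dist (f x) (f y) ≤ dist (f x) (f z) + dist (f z) (f y) := dist_triangle _ _ _
      _ ≤ r + k * r := by rw [hf x z hxz]; gcongr; exact ih hzy'
      _ = (k + 1 : ℕ) * r := by push_cast; ring

theorem dist_le_add_three_mul (hE : 2 ≤ Module.rank ℝ E) (hf : PreservesDist f r) (hr : 0 < r)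
    (x y : E) : dist (f x) (f y) ≤ dist x y + 3 * r := by
  have hceil_le : dist x y ≤ ⌈dist x y / r⌉₊ * r := (div_le_iff₀ hr).mp (Nat.le_ceil _)
  have hceil_lt : ((⌈dist x y / r⌉₊ : ℝ) - 1) * r < dist x y := (lt_div_iff₀ hr).mp <| by
    linarith [Nat.ceil_lt_add_one (by positivity : 0 ≤ dist x y / r)]
  calc dist (f x) (f y) ≤ (⌈dist x y / r⌉₊ + 2 : ℕ) * r :=
        hf.dist_le_nat_mul hE hr.le (by omega) (by push_cast; linarith)
    _ ≤ dist x y + 3 * r := by push_cast; linarith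

end PreservesDist

theorem stmt_3_general (m n : ℕ) (hm : 2 ≤ m)
    (f : EuclideanSpace ℝ (Fin m) → EuclideanSpace ℝ (Fin n))
    (hlim : ∀ ε > 0, ∃ r, 0 < r ∧ r < ε ∧
      ∀ x y, dist x y = r → dist (f x) (f y) = r) :
    ∀ x y, dist (f x) (f y) ≤ dist x y := by
  have hE : 2 ≤ Module.rank ℝ (EuclideanSpace ℝ (Fin m)) := by
    rw [← Module.finrank_eq_rank, finrank_euclideanSpace_fin]; exact_mod_cast hm
  intro x y
  refine le_of_forall_pos_le_add fun ε hε => ?_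
  obtain ⟨r, hr, hrε, hf⟩ := hlim (ε / 3) (by positivity)
  calc dist (f x) (f y) ≤ dist x y + 3 * r := PreservesDist.dist_le_add_three_mul hE hf hr x y
    _ ≤ dist x y + ε := by linarith

theorem stmt_3 (m n : ℕ) (hm : 2 ≤ m) (hn : 1 ≤ n)
    (f : EuclideanSpace ℝ (Fin m) → EuclideanSpace ℝ (Fin n))
    (hlim : ∀ ε > 0, ∃ r, 0 < r ∧ r < ε ∧
      ∀ x y, dist x y = r → dist (f x) (f y) = r) :
    ∀ x y, dist (f x) (f y) ≤ dist x y :=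
  stmt_3_general m n hm f hlim
end

section
/- Let n ≥ 2 and let f : E^n → E^n be a surjective function. Suppose r₁ and r₂ are strongly preserved by f with r₁ − r₂ ≤ 2·r₂ < r₁ + r₂ and r₁, r₂ > 0. Then r₁ − r₂ is strongly preserved by f. -/
/-!
If `dist x y = r₁ - r₂`, the spheres of radii `r₂` about `x` and `r₁` about `y` are internally
tangent, so they meet in exactly one point. A surjection strongly preserving `r₁` and `r₂` maps
this intersection onto that of the corresponding spheres about `f x` and `f y`, which is therefore
a single point too. In dimension at least two, two spheres meet in a single point only when they
are tangent, so `dist (f x) (f y)` is `r₁ - r₂` or `r₁ + r₂`. The latter is excluded because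
`r₁ - r₂ ≤ 2 r₂` gives `x` and `y` a common point at distance `r₂`, hence also `f x` and `f y`.
Being injective, `f` is a bijection, and the converse follows by applying this to `f⁻¹`.
-/

open Metric Module RealInnerProductSpace

def StronglyPreserves {α β : Type*} [PseudoMetricSpace α] [PseudoMetricSpace β] (f : α → β)
    (r : ℝ) : Prop :=
  ∀ x y, dist x y = r ↔ dist (f x) (f y) = r

section MetricSpace

variable {α β : Type*} [PseudoMetricSpace α] [PseudoMetricSpace β]

lemma abs_sub_le_dist_of_nonempty_sphere_inter {a b : α} {p q : ℝ}
    (h : (sphere a p ∩ sphere b q).Nonempty) : |p - q| ≤ dist a b := by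
  obtain ⟨z, hza, hzb⟩ := h
  rw [mem_sphere'] at hza hzb
  simpa only [hza, hzb] using abs_dist_sub_le a b z

lemma dist_le_add_of_nonempty_sphere_inter {a b : α} {p q : ℝ}
    (h : (sphere a p ∩ sphere b q).Nonempty) : dist a b ≤ p + q := by
  obtain ⟨z, hza, hzb⟩ := h
  rw [mem_sphere'] at hza
  rw [mem_sphere] at hzb
  simpa only [hza, hzb] using dist_triangle a z b

namespace StronglyPreserves

variable {f : α → β} {r p q : ℝ}

lemma preimage_sphere_inter (hp : StronglyPreserves f p) (hq : StronglyPreserves f q) (x y : α) :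
    f ⁻¹' (sphere (f x) p ∩ sphere (f y) q) = sphere x p ∩ sphere y q := by
  ext z
  simp only [Set.mem_preimage, Set.mem_inter_iff, mem_sphere, hp z x, hq z y]

lemma image_sphere_inter (hf : Function.Surjective f) (hp : StronglyPreserves f p)
    (hq : StronglyPreserves f q) (x y : α) :
    f '' (sphere x p ∩ sphere y q) = sphere (f x) p ∩ sphere (f y) q := by
  rw [← hp.preimage_sphere_inter hq, Set.image_preimage_eq _ hf]

lemma symm {e : α ≃ β} (h : StronglyPreserves e r) : StronglyPreserves e.symm r := fun x y => by
  simpa using (h (e.symm x) (e.symm y)).symm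

end StronglyPreserves

end MetricSpace

lemma StronglyPreserves.injective {E β : Type*} [NormedAddCommGroup E] [NormedSpace ℝ E]
    [PseudoMetricSpace β] {f : E → β} {r : ℝ} (hr : 0 < r) (h : StronglyPreserves f r) :
    Function.Injective f := by
  intro x y hxy
  by_contra hne
  have hd : 0 < ‖x - y‖ := norm_pos_iff.mpr (sub_ne_zero.mpr hne)
  set z := x + (r / ‖x - y‖) • (x - y)
  have hxz : dist x z = r := by
    rw [dist_self_add_right, norm_smul, Real.norm_of_nonneg (by positivity)]
    field_simp
  have hyz : dist y z = ‖x - y‖ + r := by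
    rw [dist_eq_norm', show z - y = (1 + r / ‖x - y‖) • (x - y) by module, norm_smul,
      Real.norm_of_nonneg (by positivity)]
    field_simp
  have : dist y z = r := (h y z).mpr (hxy ▸ (h x z).mp hxz)
  linarith

lemma subsingleton_sphere_inter_of_dist_eq_sub {E : Type*} [NormedAddCommGroup E]
    [NormedSpace ℝ E] [StrictConvexSpace ℝ E] {a b : E} {p q : ℝ} (hp : 0 ≤ p) (hpq : p < q)
    (hab : dist a b = q - p) : (sphere a p ∩ sphere b q).Subsingleton := by
  have hq : 0 < q := by linarith
  -- equality in the triangle inequality `dist b z ≤ dist b a + dist a z` pins `a` down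
  -- on the segment from `b` to `z`
  have key : ∀ z ∈ sphere a p ∩ sphere b q,
      a = (1 - (q - p) / q) • b + ((q - p) / q) • z := by
    rintro z ⟨hza, hzb⟩
    rw [mem_sphere'] at hza hzb
    rw [← AffineMap.lineMap_apply_module]
    apply eq_lineMap_of_dist_eq_mul_of_dist_eq_mul
    · rw [dist_comm, hab, hzb]; field_simp
    · rw [hza, hzb]; field_simp; ring
  intro z hz z' hz'
  have := (key z hz).symm.trans (key z' hz')
  exact smul_right_injective E (by positivity : (q - p) / q ≠ 0) (add_left_cancel this)

section InnerProductSpace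

variable {E : Type*} [NormedAddCommGroup E] [InnerProductSpace ℝ E]

lemma exists_norm_eq_one_inner_eq_zero [FiniteDimensional ℝ E] (hE : 2 ≤ finrank ℝ E) (v : E) :
    ∃ e : E, ‖e‖ = 1 ∧ ⟪v, e⟫ = 0 := by
  have hpos : 0 < finrank ℝ (ℝ ∙ v)ᗮ := by
    have := (ℝ ∙ v).finrank_add_finrank_orthogonal
    have : finrank ℝ (ℝ ∙ v) ≤ 1 := by simpa using finrank_span_le_card (R := ℝ) {v}
    omega
  obtain ⟨u, hu⟩ := finrank_pos_iff_exists_ne_zero.mp hpos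
  have hu' : (u : E) ≠ 0 := by simpa using hu
  refine ⟨‖(u : E)‖⁻¹ • (u : E), by simp [norm_smul, hu'], ?_⟩
  rw [inner_smul_right, Submodule.inner_right_of_mem_orthogonal
    (Submodule.mem_span_singleton_self v) u.2, mul_zero]

lemma norm_smul_add_smul_sq {v e : E} (he : ‖e‖ = 1) (hve : ⟪v, e⟫ = 0) (c h : ℝ) :
    ‖c • v + h • e‖ ^ 2 = c ^ 2 * ‖v‖ ^ 2 + h ^ 2 := by
  rw [norm_add_sq_real, inner_smul_left, inner_smul_right, norm_smul, norm_smul, hve, he]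
  simp [mul_pow]

lemma add_smul_add_smul_mem_sphere_inter {a b e : E} (he : ‖e‖ = 1) (hbe : ⟪b - a, e⟫ = 0)
    {p q t h : ℝ} (hp : 0 ≤ p) (hq : 0 ≤ q) (hpt : t ^ 2 * dist a b ^ 2 + h ^ 2 = p ^ 2)
    (hqt : (1 - t) ^ 2 * dist a b ^ 2 + h ^ 2 = q ^ 2) :
    a + t • (b - a) + h • e ∈ sphere a p ∩ sphere b q := by
  rw [dist_eq_norm'] at hpt hqt
  refine ⟨?_, ?_⟩ <;> rw [mem_sphere, dist_eq_norm, ← sq_eq_sq₀ (norm_nonneg _) ‹_›]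
  · rw [show a + t • (b - a) + h • e - a = t • (b - a) + h • e by abel,
      norm_smul_add_smul_sq he hbe, hpt]
  · rw [show a + t • (b - a) + h • e - b = (t - 1) • (b - a) + h • e by module,
      norm_smul_add_smul_sq he hbe, ← hqt]
    ring

/-- `t` and `h` are the coordinates, along `b - a` and orthogonally to it, of a common point
of the spheres of radii `p`, `q` about `a`, `b` at distance `d`; the formula for `h` is Heron's. -/
lemma exists_sphere_inter_coords {d p q : ℝ} (hd : 0 < d) (h₁ : |p - q| ≤ d) (h₂ : d ≤ p + q) :
    ∃ t h : ℝ, (2 * d * h) ^ 2 = ((p + q) ^ 2 - d ^ 2) * (d ^ 2 - (p - q) ^ 2) ∧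
      t ^ 2 * d ^ 2 + h ^ 2 = p ^ 2 ∧ (1 - t) ^ 2 * d ^ 2 + h ^ 2 = q ^ 2 := by
  have hsum : 0 ≤ (p + q) ^ 2 - d ^ 2 := by nlinarith
  have hdiff : 0 ≤ d ^ 2 - (p - q) ^ 2 := by
    nlinarith [sq_abs (p - q), abs_nonneg (p - q)]
  set h := √(((p + q) ^ 2 - d ^ 2) * (d ^ 2 - (p - q) ^ 2)) / (2 * d)
  have hh : (2 * d * h) ^ 2 = ((p + q) ^ 2 - d ^ 2) * (d ^ 2 - (p - q) ^ 2) := by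
    rw [mul_div_cancel₀ _ (by positivity), Real.sq_sqrt (by positivity)]
  refine ⟨(d ^ 2 + p ^ 2 - q ^ 2) / (2 * d ^ 2), h, hh, ?_, ?_⟩
  · field_simp
    nlinarith [hh]
  · field_simp
    nlinarith [hh]

variable [FiniteDimensional ℝ E]

lemma nonempty_sphere_inter (hE : 2 ≤ finrank ℝ E) {a b : E} (hab : a ≠ b) {p q : ℝ}
    (h₁ : |p - q| ≤ dist a b) (h₂ : dist a b ≤ p + q) : (sphere a p ∩ sphere b q).Nonempty := by
  obtain ⟨e, he, hbe⟩ := exists_norm_eq_one_inner_eq_zero hE (b - a)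
  obtain ⟨t, h, -, hpt, hqt⟩ := exists_sphere_inter_coords (dist_pos.mpr hab) h₁ h₂
  have := abs_sub_le_iff.mp h₁
  exact ⟨_, add_smul_add_smul_mem_sphere_inter he hbe (by linarith) (by linarith) hpt hqt⟩

lemma nontrivial_sphere_inter (hE : 2 ≤ finrank ℝ E) {a b : E} {p q : ℝ}
    (h₁ : |p - q| < dist a b) (h₂ : dist a b < p + q) : (sphere a p ∩ sphere b q).Nontrivial := by
  have hd : 0 < dist a b := (abs_nonneg _).trans_lt h₁
  obtain ⟨e, he, hbe⟩ := exists_norm_eq_one_inner_eq_zero hE (b - a)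
  obtain ⟨t, h, hh, hpt, hqt⟩ := exists_sphere_inter_coords hd h₁.le h₂.le
  have := abs_sub_lt_iff.mp h₁
  have hh0 : h ≠ 0 := by
    rintro rfl
    nlinarith [mul_pos (show 0 < (p + q) ^ 2 - dist a b ^ 2 by nlinarith)
      (show 0 < dist a b ^ 2 - (p - q) ^ 2 by nlinarith)]
  refine ⟨_, add_smul_add_smul_mem_sphere_inter he hbe (by linarith) (by linarith) hpt hqt,
    _, add_smul_add_smul_mem_sphere_inter he hbe (t := t) (h := -h) (by linarith) (by linarith)
      (by rwa [neg_sq]) (by rwa [neg_sq]), fun heq => ?_⟩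
  have he0 : e ≠ 0 := by rintro rfl; simp at he
  have : (h - -h) • e = 0 := by rw [sub_smul, add_left_cancel heq, sub_self]
  rcases smul_eq_zero.mp this with h0 | h0
  · exact hh0 (by linarith)
  · exact he0 h0

lemma dist_eq_of_subsingleton_sphere_inter (hE : 2 ≤ finrank ℝ E) {a b : E} {p q : ℝ}
    (hne : (sphere a p ∩ sphere b q).Nonempty) (hsub : (sphere a p ∩ sphere b q).Subsingleton) :
    dist a b = |p - q| ∨ dist a b = p + q := by
  by_contra! h
  exact hsub.not_nontrivial <| nontrivial_sphere_inter hE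
    ((abs_sub_le_dist_of_nonempty_sphere_inter hne).lt_of_ne h.1.symm)
    ((dist_le_add_of_nonempty_sphere_inter hne).lt_of_ne h.2)

end InnerProductSpace

namespace StronglyPreserves

variable {E F : Type*} [NormedAddCommGroup E] [InnerProductSpace ℝ E] [FiniteDimensional ℝ E]
  [NormedAddCommGroup F] [InnerProductSpace ℝ F] [FiniteDimensional ℝ F] {r₁ r₂ : ℝ}

lemma dist_map_eq_sub (hE : 2 ≤ finrank ℝ E) (hF : 2 ≤ finrank ℝ F) {f : E → F}
    (hf : Function.Surjective f) (hr₂ : 0 < r₂) (h₁ : r₁ - r₂ ≤ 2 * r₂) (h₂ : r₂ < r₁)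
    (hp₁ : StronglyPreserves f r₁) (hp₂ : StronglyPreserves f r₂) {x y : E}
    (hxy : dist x y = r₁ - r₂) :
    dist (f x) (f y) = r₁ - r₂ := by
  have hne : x ≠ y := dist_pos.mp (by linarith)
  have htouch := hp₂.image_sphere_inter hf hp₁ x y
  have hnonempty : (sphere (f x) r₂ ∩ sphere (f y) r₁).Nonempty := htouch ▸
    (nonempty_sphere_inter hE hne (by rw [hxy, abs_sub_comm, abs_of_pos (by linarith)])
      (by linarith)).image f
  have hsub : (sphere (f x) r₂ ∩ sphere (f y) r₁).Subsingleton := htouch ▸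
    (subsingleton_sphere_inter_of_dist_eq_sub hr₂.le h₂ hxy).image f
  have hle : dist (f x) (f y) ≤ r₂ + r₂ := dist_le_add_of_nonempty_sphere_inter <|
    hp₂.image_sphere_inter hf hp₂ x y ▸ (nonempty_sphere_inter hE hne
      (by rw [sub_self, abs_zero]; exact dist_nonneg) (by linarith)).image f
  rcases dist_eq_of_subsingleton_sphere_inter hF hnonempty hsub with h | h
  · rwa [abs_sub_comm, abs_of_pos (by linarith)] at h
  · linarith

lemma sub (hE : 2 ≤ finrank ℝ E) (hF : 2 ≤ finrank ℝ F) {f : E → F}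
    (hf : Function.Surjective f) (hr₂ : 0 < r₂) (h₁ : r₁ - r₂ ≤ 2 * r₂) (h₂ : r₂ < r₁)
    (hp₁ : StronglyPreserves f r₁) (hp₂ : StronglyPreserves f r₂) :
    StronglyPreserves f (r₁ - r₂) := by
  let e := Equiv.ofBijective f ⟨hp₂.injective hr₂, hf⟩
  have hp₁' : StronglyPreserves e r₁ := hp₁
  have hp₂' : StronglyPreserves e r₂ := hp₂
  refine fun x y => ⟨dist_map_eq_sub hE hF hf hr₂ h₁ h₂ hp₁ hp₂, fun h => ?_⟩
  have := dist_map_eq_sub hF hE e.symm.surjective hr₂ h₁ h₂ hp₁'.symm hp₂'.symm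
    (x := e x) (y := e y) h
  rwa [e.symm_apply_apply, e.symm_apply_apply] at this

end StronglyPreserves

theorem stmt_9_general (n : ℕ) (hn : 2 ≤ n)
    (f : EuclideanSpace ℝ (Fin n) → EuclideanSpace ℝ (Fin n))
    (hf : Function.Surjective f)
    (r₁ r₂ : ℝ) (hr₂ : 0 < r₂)
    (h₁ : r₁ - r₂ ≤ 2 * r₂) (h₂ : 2 * r₂ < r₁ + r₂)
    (hp₁ : ∀ x y, dist x y = r₁ ↔ dist (f x) (f y) = r₁)
    (hp₂ : ∀ x y, dist x y = r₂ ↔ dist (f x) (f y) = r₂) :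
    ∀ x y, dist x y = r₁ - r₂ ↔ dist (f x) (f y) = r₁ - r₂ := by
  have hE : 2 ≤ finrank ℝ (EuclideanSpace ℝ (Fin n)) := by rwa [finrank_euclideanSpace_fin]
  exact StronglyPreserves.sub hE hE hf hr₂ h₁ (by linarith) hp₁ hp₂

theorem stmt_9 (n : ℕ) (hn : 2 ≤ n)
    (f : EuclideanSpace ℝ (Fin n) → EuclideanSpace ℝ (Fin n))
    (hf : Function.Surjective f)
    (r₁ r₂ : ℝ) (hr₁ : 0 < r₁) (hr₂ : 0 < r₂)
    (h₁ : r₁ - r₂ ≤ 2 * r₂) (h₂ : 2 * r₂ < r₁ + r₂)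
    (hp₁ : ∀ x y, dist x y = r₁ ↔ dist (f x) (f y) = r₁)
    (hp₂ : ∀ x y, dist x y = r₂ ↔ dist (f x) (f y) = r₂) :
    ∀ x y, dist x y = r₁ - r₂ ↔ dist (f x) (f y) = r₁ - r₂ :=
  stmt_9_general n hn f hf r₁ r₂ hr₂ h₁ h₂ hp₁ hp₂
end
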